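/- Let m ≥ 3 be an integer and G a finite simple graph. Then ε(F_2^m(G)) = (m − 2 + √(m² − 2m + 5)) · ε(G), where ε denotes graph energy. -/

import Mathlib

open Matrix

noncomputable section

/-- The multiplicity of `μ` as an eigenvalue of a real matrix `M`:
the dimension of the kernel of `M - μ·Id`. -/
def eigMult {n : Type} [Fintype n] [DecidableEq n] (M : Matrix n n ℝ) (μ : ℝ) : ℕ :=
  Module.finrank ℝ (LinearMap.ker (Matrix.toLin' (M - μ • (1 : Matrix n n ℝ))))

/-- The energy of a real symmetric matrix: the sum of the absolute values of its
eigenvalues, counted with multiplicity. -/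
def matEnergy {n : Type} [Fintype n] [DecidableEq n] (M : Matrix n n ℝ) : ℝ :=
  if h : M.IsHermitian then ∑ i, |h.eigenvalues i| else 0

/-- The incidence matrix of a graph, rows indexed by vertices, columns by edges. -/
def incid {V : Type} [DecidableEq V] (G : SimpleGraph V) : Matrix V G.edgeSet ℝ :=
  fun v e => if v ∈ (e : Sym2 V) then 1 else 0

/-- Adjacency matrix of the subdivision graph `S(G)`. -/
def AS {V : Type} [DecidableEq V] (G : SimpleGraph V) :
    Matrix (V ⊕ G.edgeSet) (V ⊕ G.edgeSet) ℝ :=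
  Matrix.fromBlocks 0 (incid G) (incid G)ᵀ 0

/-- Adjacency matrix of `S(G)_k`. -/
def ASk {V : Type} [DecidableEq V] (G : SimpleGraph V) (k : ℕ) :
    Matrix (V ⊕ (Fin k × G.edgeSet)) (V ⊕ (Fin k × G.edgeSet)) ℝ :=
  fun x y => match x, y with
    | Sum.inl v, Sum.inr (_, e) => if v ∈ (e : Sym2 V) then 1 else 0
    | Sum.inr (_, e), Sum.inl v => if v ∈ (e : Sym2 V) then 1 else 0
    | _, _ => 0

/-- Adjacency matrix of `S(G)_t^n`. -/
def AStn {V : Type} [DecidableEq V] (G : SimpleGraph V) (n t : ℕ) :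
    Matrix ((Fin (n + 1) × V) ⊕ (Fin (t + 1) × G.edgeSet))
           ((Fin (n + 1) × V) ⊕ (Fin (t + 1) × G.edgeSet)) ℝ :=
  fun x y => match x, y with
    | Sum.inl (_, v), Sum.inr (_, e) => if v ∈ (e : Sym2 V) then 1 else 0
    | Sum.inr (_, e), Sum.inl (_, v) => if v ∈ (e : Sym2 V) then 1 else 0
    | _, _ => 0

/-- The subdivision graph `S(G)` as a simple graph. -/
def SGGraph {V : Type} (G : SimpleGraph V) : SimpleGraph (V ⊕ G.edgeSet) where
  Adj x y :=
    (∃ (v : V) (e : G.edgeSet), x = Sum.inl v ∧ y = Sum.inr e ∧ v ∈ (e : Sym2 V)) ∨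
    (∃ (v : V) (e : G.edgeSet), x = Sum.inr e ∧ y = Sum.inl v ∧ v ∈ (e : Sym2 V))
  symm := by
    refine ⟨?_⟩
    rintro x y (⟨v, e, rfl, rfl, h⟩ | ⟨v, e, rfl, rfl, h⟩)
    · exact Or.inr ⟨v, e, rfl, rfl, h⟩
    · exact Or.inl ⟨v, e, rfl, rfl, h⟩
  loopless := by
    refine ⟨?_⟩
    rintro x (⟨v, e, h1, h2, _⟩ | ⟨v, e, h1, h2, _⟩) <;> subst h1 <;> simp_all

/-- The graph `S(G)_k`. -/
def SGkGraph {V : Type} (G : SimpleGraph V) (k : ℕ) :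
    SimpleGraph (V ⊕ (Fin k × G.edgeSet)) where
  Adj x y :=
    (∃ (v : V) (ie : Fin k × G.edgeSet),
        x = Sum.inl v ∧ y = Sum.inr ie ∧ v ∈ (ie.2 : Sym2 V)) ∨
    (∃ (v : V) (ie : Fin k × G.edgeSet),
        x = Sum.inr ie ∧ y = Sum.inl v ∧ v ∈ (ie.2 : Sym2 V))
  symm := by
    refine ⟨?_⟩
    rintro x y (⟨v, ie, rfl, rfl, h⟩ | ⟨v, ie, rfl, rfl, h⟩)
    · exact Or.inr ⟨v, ie, rfl, rfl, h⟩
    · exact Or.inl ⟨v, ie, rfl, rfl, h⟩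
  loopless := by
    refine ⟨?_⟩
    rintro x (⟨v, ie, h1, h2, _⟩ | ⟨v, ie, h1, h2, _⟩) <;> subst h1 <;> simp_all

/-- The graph `S(G)_t^n`. -/
def SGtnGraph {V : Type} (G : SimpleGraph V) (n t : ℕ) :
    SimpleGraph ((Fin (n + 1) × V) ⊕ (Fin (t + 1) × G.edgeSet)) where
  Adj x y :=
    (∃ (iv : Fin (n + 1) × V) (je : Fin (t + 1) × G.edgeSet),
        x = Sum.inl iv ∧ y = Sum.inr je ∧ iv.2 ∈ (je.2 : Sym2 V)) ∨
    (∃ (iv : Fin (n + 1) × V) (je : Fin (t + 1) × G.edgeSet),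
        x = Sum.inr je ∧ y = Sum.inl iv ∧ iv.2 ∈ (je.2 : Sym2 V))
  symm := by
    refine ⟨?_⟩
    rintro x y (⟨iv, je, rfl, rfl, h⟩ | ⟨iv, je, rfl, rfl, h⟩)
    · exact Or.inr ⟨iv, je, rfl, rfl, h⟩
    · exact Or.inl ⟨iv, je, rfl, rfl, h⟩
  loopless := by
    refine ⟨?_⟩
    rintro x (⟨iv, je, h1, h2, _⟩ | ⟨iv, je, h1, h2, _⟩) <;> subst h1 <;> simp_all

open scoped Classical in
/-- The Randić matrix of a graph: entry `1/√(deg u · deg v)` when `u ~ v`, else `0`. -/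
def randicMatrix {W : Type} (H : SimpleGraph W) : Matrix W W ℝ :=
  fun u v =>
    if H.Adj u v then
      1 / Real.sqrt ((Nat.card (H.neighborSet u) * Nat.card (H.neighborSet v) : ℕ) : ℝ)
    else 0

/-- `H` has no isolated vertices. -/
def NoIsolated {W : Type} (H : SimpleGraph W) : Prop := ∀ v, ∃ u, H.Adj v u

/-- The matrix `B` used in the construction of `F₁^m(G)`: all entries `1`
except `B(1,1) = 0` and `B(i, m+1-i) = 0` for `2 ≤ i ≤ m-1` (1-based indexing). -/
def Bmat (m : ℕ) : Matrix (Fin m) (Fin m) ℝ :=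
  fun i j =>
    if (i.val = 0 ∧ j.val = 0) ∨ (i.val ≠ 0 ∧ j.val ≠ 0 ∧ i.val + j.val = m - 1) then 0 else 1

lemma Bmat_symm (m : ℕ) (i j : Fin m) : Bmat m i j = Bmat m j i := by
  unfold Bmat
  by_cases h : (i.val = 0 ∧ j.val = 0) ∨ (i.val ≠ 0 ∧ j.val ≠ 0 ∧ i.val + j.val = m - 1)
  · rw [if_pos h, if_pos (by omega)]
  · rw [if_neg h, if_neg (by omega)]

/-- The graph `F₁^m(G)`: `(i,u) ~ (j,v)` iff `B(i,j) = 1` and `u ~ v` in `G`. -/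
def F1Graph {V : Type} (m : ℕ) (G : SimpleGraph V) : SimpleGraph (Fin m × V) where
  Adj x y := Bmat m x.1 y.1 = 1 ∧ G.Adj x.2 y.2
  symm := by
    refine ⟨?_⟩
    rintro x y ⟨hb, ha⟩
    refine ⟨?_, ha.symm⟩
    rw [Bmat_symm]; exact hb
  loopless := ⟨fun x h => G.loopless.1 x.2 h.2⟩

/-- The matrix `H` used in the construction of `F₂^m(G)`: all entries `1`
except `H(i,i) = 0` for `2 ≤ i ≤ m` (1-based indexing). -/
def HmatF2 (m : ℕ) : Matrix (Fin m) (Fin m) ℝ :=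
  fun i j => if i.val = j.val ∧ i.val ≠ 0 then 0 else 1

lemma HmatF2_symm (m : ℕ) (i j : Fin m) : HmatF2 m i j = HmatF2 m j i := by
  unfold HmatF2
  by_cases h : i.val = j.val ∧ i.val ≠ 0
  · rw [if_pos h, if_pos (by omega)]
  · rw [if_neg h, if_neg (by omega)]

/-- The graph `F₂^m(G)`: `(i,u) ~ (j,v)` iff `H(i,j) = 1` and `u ~ v` in `G`. -/
def F2Graph {V : Type} (m : ℕ) (G : SimpleGraph V) : SimpleGraph (Fin m × V) where
  Adj x y := HmatF2 m x.1 y.1 = 1 ∧ G.Adj x.2 y.2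
  symm := by
    refine ⟨?_⟩
    rintro x y ⟨hb, ha⟩
    refine ⟨?_, ha.symm⟩
    rw [HmatF2_symm]; exact hb
  loopless := ⟨fun x h => G.loopless.1 x.2 h.2⟩

/-- The tensor (Kronecker) product of simple graphs. -/
def tensorGraph {W U : Type} (H : SimpleGraph W) (G : SimpleGraph U) :
    SimpleGraph (W × U) where
  Adj x y := H.Adj x.1 y.1 ∧ G.Adj x.2 y.2
  symm := ⟨fun _ _ h => ⟨h.1.symm, h.2.symm⟩⟩
  loopless := ⟨fun x h => H.loopless.1 x.1 h.1⟩


section AuxLemmas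
open Polynomial



noncomputable section

variable {n k : Type} [Fintype n] [DecidableEq n] [Fintype k]

lemma my_scalar_eq : Matrix.scalar n (X : ℝ[X]) = (X : ℝ[X]) • (1 : Matrix n n ℝ[X]) := by
  ext i j; by_cases hij : i = j <;>
    simp [Matrix.scalar_apply, Matrix.smul_apply, Matrix.one_apply, hij, diagonal_apply]

lemma my_charpoly_conj (P P' N : Matrix n n ℝ) (h : P * P' = 1) :
    (P * N * P').charpoly = N.charpoly := by
  have hPP' : (C : ℝ →+* ℝ[X]).mapMatrix P * (C : ℝ →+* ℝ[X]).mapMatrix P' = 1 := by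
    rw [← _root_.map_mul, h, _root_.map_one]
  have hc : charmatrix (P * N * P') =
      (C : ℝ →+* ℝ[X]).mapMatrix P * charmatrix N * (C : ℝ →+* ℝ[X]).mapMatrix P' := by
    calc charmatrix (P * N * P')
        = (X : ℝ[X]) • (1 : Matrix n n ℝ[X]) - (C : ℝ →+* ℝ[X]).mapMatrix (P * N * P') := by
          rw [charmatrix, my_scalar_eq]
      _ = (X : ℝ[X]) • ((C : ℝ →+* ℝ[X]).mapMatrix P * (C : ℝ →+* ℝ[X]).mapMatrix P')
          - (C : ℝ →+* ℝ[X]).mapMatrix P * (C : ℝ →+* ℝ[X]).mapMatrix N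
            * (C : ℝ →+* ℝ[X]).mapMatrix P' := by rw [hPP', _root_.map_mul, _root_.map_mul]
      _ = (C : ℝ →+* ℝ[X]).mapMatrix P * ((X : ℝ[X]) • (1 : Matrix n n ℝ[X])
          - (C : ℝ →+* ℝ[X]).mapMatrix N) * (C : ℝ →+* ℝ[X]).mapMatrix P' := by
          rw [mul_sub, sub_mul]
          congr 1
          rw [mul_smul_comm, mul_one, smul_mul_assoc]
      _ = _ := by rw [charmatrix, my_scalar_eq]
  rw [Matrix.charpoly, hc, det_mul, det_mul, mul_right_comm, ← det_mul, hPP', det_one, one_mul,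
    Matrix.charpoly]

lemma my_charpoly_diagonal (d : n → ℝ) :
    (diagonal d).charpoly = ∏ i, (X - C (d i)) := by
  have hc : charmatrix (diagonal d) = diagonal (fun i => X - C (d i)) := by
    ext i j
    by_cases hij : i = j
    · subst hij; simp
    · simp [hij, diagonal_apply_ne _ hij]
  rw [Matrix.charpoly, hc, det_diagonal]

lemma my_herm_charpoly (M : Matrix n n ℝ) (hM : M.IsHermitian) :
    M.charpoly = ∏ i, (X - C (hM.eigenvalues i)) := by
  have hs := hM.spectral_theorem
  have hU : (hM.eigenvectorUnitary : Matrix n n ℝ) * star (hM.eigenvectorUnitary : Matrix n n ℝ)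
      = 1 := Matrix.mem_unitaryGroup_iff.mp hM.eigenvectorUnitary.2
  calc M.charpoly
      = ((hM.eigenvectorUnitary : Matrix n n ℝ) * diagonal (RCLike.ofReal ∘ hM.eigenvalues)
          * star (hM.eigenvectorUnitary : Matrix n n ℝ)).charpoly := by
            rw [Unitary.conjStarAlgAut_apply] at hs; rw [← hs]
    _ = (diagonal (RCLike.ofReal ∘ hM.eigenvalues)).charpoly := my_charpoly_conj _ _ _ hU
    _ = ∏ i, (X - C (hM.eigenvalues i)) := by
        rw [RCLike.ofReal_real_eq_id]
        simpa using my_charpoly_diagonal hM.eigenvalues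

lemma my_sum_abs_eig (M : Matrix n n ℝ) (hM : M.IsHermitian) (d : k → ℝ)
    (hd : M.charpoly = ∏ j, (X - C (d j))) :
    ∑ i, |hM.eigenvalues i| = ∑ j, |d j| := by
  have key : ∀ {α : Type} [inst : Fintype α] (f : α → ℝ),
      (∏ j : α, (X - C (f j))).roots = Finset.univ.val.map f := by
    intro α _ f
    rw [Finset.prod_eq_multiset_prod, show (Multiset.map (fun j => X - C (f j)) Finset.univ.val) = Multiset.map (fun a => X - C a) (Multiset.map f Finset.univ.val) from by rw [Multiset.map_map]; rfl]
    exact roots_multiset_prod_X_sub_C _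
  have hroots : Finset.univ.val.map hM.eigenvalues = Finset.univ.val.map d := by
    rw [← key hM.eigenvalues, ← key d, ← my_herm_charpoly M hM, ← hd]
  calc ∑ i, |hM.eigenvalues i|
      = ((Finset.univ.val.map hM.eigenvalues).map abs).sum := by
        rw [Multiset.map_map, Finset.sum_eq_multiset_sum]; rfl
    _ = ((Finset.univ.val.map d).map abs).sum := by rw [hroots]
    _ = ∑ j, |d j| := by rw [Multiset.map_map, Finset.sum_eq_multiset_sum]; rfl

end

noncomputable section
open Kronecker

variable {n k : Type} [Fintype n] [DecidableEq n] [Fintype k]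

lemma my_isHermitian {M : Matrix n n ℝ} (h : ∀ i j, M i j = M j i) : M.IsHermitian := by
  ext i j
  simp [conjTranspose_apply, h i j]

lemma my_spectral (M : Matrix n n ℝ) (hM : M.IsHermitian) :
    M = (hM.eigenvectorUnitary : Matrix n n ℝ) * diagonal hM.eigenvalues
      * star (hM.eigenvectorUnitary : Matrix n n ℝ) := by
  have := hM.spectral_theorem
  rwa [Unitary.conjStarAlgAut_apply, RCLike.ofReal_real_eq_id, Function.id_comp] at this

lemma my_kron_charpoly {V : Type} [Fintype V] [DecidableEq V]
    (M1 : Matrix n n ℝ) (M2 : Matrix V V ℝ) (h1 : M1.IsHermitian) (h2 : M2.IsHermitian) :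
    (M1 ⊗ₖ M2).charpoly = ∏ p : n × V, (X - C (h1.eigenvalues p.1 * h2.eigenvalues p.2)) := by
  set U1 := (h1.eigenvectorUnitary : Matrix n n ℝ) with hU1def
  set U2 := (h2.eigenvectorUnitary : Matrix V V ℝ) with hU2def
  have hU1 : U1 * star U1 = 1 := Matrix.mem_unitaryGroup_iff.mp h1.eigenvectorUnitary.2
  have hU2 : U2 * star U2 = 1 := Matrix.mem_unitaryGroup_iff.mp h2.eigenvectorUnitary.2
  have hkron : M1 ⊗ₖ M2 = (U1 ⊗ₖ U2) * (diagonal h1.eigenvalues ⊗ₖ diagonal h2.eigenvalues)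
      * (star U1 ⊗ₖ star U2) := by
    rw [← mul_kronecker_mul, ← mul_kronecker_mul, ← my_spectral M1 h1, ← my_spectral M2 h2]
  have hPP' : (U1 ⊗ₖ U2) * (star U1 ⊗ₖ star U2) = 1 := by
    rw [← mul_kronecker_mul, hU1, hU2, one_kronecker_one]
  rw [hkron, my_charpoly_conj _ _ _ hPP', diagonal_kronecker_diagonal, my_charpoly_diagonal]

end


noncomputable section

abbrev Cmk (k : ℕ) : Matrix (Fin k) (Fin 2) ℝ := fun _ b => if b = 1 then 1 else 0

lemma my_H'_blocks (k : ℕ) :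
    reindex (finSumFinEquiv (m := 2) (n := k)).symm (finSumFinEquiv (m := 2) (n := k)).symm (HmatF2 (2 + k)) =
      fromBlocks (!![1,(1:ℝ);1,0]) (Matrix.of fun _ _ => 1) (Matrix.of fun _ _ => 1)
        (Matrix.of fun i j => if i = j then 0 else 1) := by
  ext x y
  cases x with
  | inl i => cases y with
    | inl j =>
        simp only [reindex_apply, submatrix_apply, Equiv.symm_symm, finSumFinEquiv_apply_left,
          HmatF2, fromBlocks_apply₁₁, Fin.coe_castAdd]
        fin_cases i <;> fin_cases j <;> norm_num
    | inr j =>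
        simp only [reindex_apply, submatrix_apply, Equiv.symm_symm, finSumFinEquiv_apply_left,
          finSumFinEquiv_apply_right, HmatF2, fromBlocks_apply₁₂, Matrix.of_apply, Fin.coe_castAdd,
          Fin.coe_natAdd]
        exact if_neg (by omega)
  | inr i => cases y with
    | inl j =>
        simp only [reindex_apply, submatrix_apply, Equiv.symm_symm, finSumFinEquiv_apply_left,
          finSumFinEquiv_apply_right, HmatF2, fromBlocks_apply₂₁, Matrix.of_apply, Fin.coe_castAdd,
          Fin.coe_natAdd]
        exact if_neg (by omega)
    | inr j =>
        simp only [reindex_apply, submatrix_apply, Equiv.symm_symm,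
          finSumFinEquiv_apply_right, HmatF2, fromBlocks_apply₂₂, Matrix.of_apply, Fin.coe_natAdd]
        by_cases h : i = j
        · subst h; exact (if_pos (⟨rfl, by omega⟩ : 2 + (i : ℕ) = 2 + i ∧ 2 + (i : ℕ) ≠ 0)).trans (if_pos rfl).symm
        · exact (if_neg (by rw [Fin.ext_iff] at h; omega)).trans (if_neg h).symm

end


section HP
variable (k : ℕ)

lemma my_H_charpoly (k : ℕ) (r₁ r₂ : ℝ) (hsum : r₁ + r₂ = (k : ℝ) + 1)
    (hmul : r₁ * r₂ = -1) :
    (HmatF2 (2 + k)).charpoly =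
      ∏ x : Fin 2 ⊕ Fin k, (X - C (Sum.elim ![r₁, r₂] (fun _ => (-1 : ℝ)) x)) := by
  classical
  set C₂ : Matrix (Fin 2) (Fin 2) ℝ := !![1,(k:ℝ)+1;1,(k:ℝ)] with hC₂
  set Cm : Matrix (Fin k) (Fin 2) ℝ := Matrix.of fun _ b => if b = 1 then 1 else 0 with hCm
  set T : Matrix (Fin 2 ⊕ Fin k) (Fin 2 ⊕ Fin k) ℝ := fromBlocks 1 0 Cm 1 with hT
  set T' : Matrix (Fin 2 ⊕ Fin k) (Fin 2 ⊕ Fin k) ℝ := fromBlocks 1 0 (-Cm) 1 with hT'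
  set B : Matrix (Fin 2 ⊕ Fin k) (Fin 2 ⊕ Fin k) ℝ :=
    fromBlocks C₂ (Matrix.of fun _ _ => 1) 0 (-1) with hB
  set H' : Matrix (Fin 2 ⊕ Fin k) (Fin 2 ⊕ Fin k) ℝ :=
    reindex (finSumFinEquiv (m := 2) (n := k)).symm (finSumFinEquiv (m := 2) (n := k)).symm
      (HmatF2 (2 + k)) with hH'
  have hTT' : T * T' = 1 := by
    rw [hT, hT', fromBlocks_multiply]
    simp [← fromBlocks_one]
  have hsum1 : ∀ x : Fin k, ∑ j : Fin k, (if x = j then (0:ℝ) else 1) = (k:ℝ) - 1 := by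
    intro x
    have : ∀ j : Fin k, (if x = j then (0:ℝ) else 1) = 1 - (if x = j then 1 else 0) := by
      intro j; split_ifs <;> ring
    simp only [this, Finset.sum_sub_distrib, Finset.sum_const, Finset.card_univ,
      Fintype.card_fin, Finset.sum_ite_eq, Finset.mem_univ, if_pos]
    simp
  have hHT : H' * T = T * B := by
    rw [hH', my_H'_blocks, hT, hB, fromBlocks_multiply, fromBlocks_multiply]
    ext x y
    cases x with
    | inl x => cases y with
      | inl y =>
          simp only [fromBlocks_apply₁₁, Matrix.add_apply, Matrix.mul_apply, Matrix.one_apply,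
            Matrix.zero_apply, hCm, hC₂, Matrix.of_apply]
          fin_cases x <;> fin_cases y <;>
            simp [Fin.sum_univ_two, Finset.sum_const, Finset.card_univ, nsmul_eq_mul] <;> ring
      | inr y =>
          simp only [fromBlocks_apply₁₂, Matrix.add_apply, Matrix.mul_apply, Matrix.one_apply,
            Matrix.zero_apply, Matrix.neg_apply, hCm, hC₂, Matrix.of_apply]
          simp [Fin.sum_univ_two, Finset.sum_ite_eq, mul_ite]
    | inr x => cases y with
      | inl y =>
          simp only [fromBlocks_apply₂₁, Matrix.add_apply, Matrix.mul_apply, Matrix.one_apply,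
            Matrix.zero_apply, hCm, hC₂, Matrix.of_apply]
          fin_cases y <;>
            simp [Fin.sum_univ_two, hsum1 x, mul_ite, Finset.sum_ite_eq] <;> ring
      | inr y =>
          simp only [fromBlocks_apply₂₂, Matrix.add_apply, Matrix.mul_apply, Matrix.one_apply,
            Matrix.zero_apply, Matrix.neg_apply, hCm, hC₂, Matrix.of_apply]
          by_cases h : x = y <;>
            simp [h, Fin.sum_univ_two, Finset.sum_ite_eq, mul_ite]
  have hsim : H' = T * B * T' := by
    have h1 : H' * (T * T') = T * B * T' := by rw [← mul_assoc, hHT]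
    rwa [hTT', mul_one] at h1
  have hq : C₂.charpoly = (X - C r₁) * (X - C r₂) := by
    have hdet : C₂.charpoly = (X - 1) * (X - C (k:ℝ)) - (C (k:ℝ) + 1) := by
      rw [Matrix.charpoly, det_fin_two]
      rw [charmatrix_apply_eq, charmatrix_apply_eq,
        charmatrix_apply_ne _ _ _ (by decide), charmatrix_apply_ne _ _ _ (by decide)]
      simp [hC₂, C_add, C_1]
    have h1 : Polynomial.C r₁ + Polynomial.C r₂ = Polynomial.C (k : ℝ) + 1 := by
      rw [← C_add, hsum, C_add, C_1]
    have h2 : Polynomial.C r₁ * Polynomial.C r₂ = -1 := by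
      rw [← C_mul, hmul, map_neg, C_1]
    rw [hdet]
    linear_combination (X : ℝ[X]) * h1 - h2
  have hneg : (-1 : Matrix (Fin k) (Fin k) ℝ).charpoly = ∏ _i : Fin k, (X - C (-1 : ℝ)) := by
    have : (-1 : Matrix (Fin k) (Fin k) ℝ) = diagonal (fun _ => -1) := by
      ext i j
      by_cases h : i = j <;> simp [h, Matrix.one_apply, diagonal_apply]
    rw [this, my_charpoly_diagonal]
  calc (HmatF2 (2 + k)).charpoly = H'.charpoly := (Matrix.charpoly_reindex _ _).symm
    _ = B.charpoly := by rw [hsim, my_charpoly_conj _ _ _ hTT']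
    _ = C₂.charpoly * (-1 : Matrix (Fin k) (Fin k) ℝ).charpoly := charpoly_fromBlocks_zero₂₁ _ _ _
    _ = _ := by
        rw [hq, hneg, Fintype.prod_sum_type]
        simp [Fin.prod_univ_two]

end HP

end AuxLemmas

/-- `ε(F₂^m(G)) = (m − 2 + √(m² − 2m + 5)) · ε(G)` for `m ≥ 3`; the adjacency
matrix of `F₂^m(G)` is the Kronecker product `H ⊗ A(G)`. -/
theorem stmt_15 (m : ℕ) (hm : 3 ≤ m)
    (V : Type) [Fintype V] [DecidableEq V] (G : SimpleGraph V) [DecidableRel G.Adj] :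
    matEnergy (Matrix.kroneckerMap (· * ·) (HmatF2 m) (G.adjMatrix ℝ)) =
      ((m : ℝ) - 2 + Real.sqrt ((m : ℝ) ^ 2 - 2 * (m : ℝ) + 5)) *
        matEnergy (G.adjMatrix ℝ) := by
  classical
  obtain ⟨k, rfl⟩ : ∃ k, m = 2 + k := ⟨m - 2, by omega⟩
  set s : ℝ := Real.sqrt (((k:ℝ)+1)^2 + 4) with hsdef
  have hs0 : 0 ≤ s := Real.sqrt_nonneg _
  have hssq : s^2 = ((k:ℝ)+1)^2 + 4 := Real.sq_sqrt (by positivity)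
  have hsge : (k:ℝ) + 1 ≤ s := by nlinarith
  set r₁ : ℝ := (((k:ℝ)+1) + s)/2 with hr1def
  set r₂ : ℝ := (((k:ℝ)+1) - s)/2 with hr2def
  have hsum : r₁ + r₂ = (k:ℝ) + 1 := by rw [hr1def, hr2def]; ring
  have hmul : r₁ * r₂ = -1 := by
    have : r₁ * r₂ = (((k:ℝ)+1)^2 - s^2)/4 := by rw [hr1def, hr2def]; ring
    rw [this, hssq]; ring
  have habs1 : |r₁| = r₁ := abs_of_nonneg (by rw [hr1def]; positivity)
  have habs2 : |r₂| = -r₂ := abs_of_nonpos (by rw [hr2def]; linarith)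
  have hH : (HmatF2 (2+k)).IsHermitian := my_isHermitian (fun i j => HmatF2_symm _ i j)
  have hA : (G.adjMatrix ℝ).IsHermitian := my_isHermitian (fun i j => by
    simp [SimpleGraph.adjMatrix_apply, SimpleGraph.adj_comm])
  have hK : (Matrix.kroneckerMap (· * ·) (HmatF2 (2+k)) (G.adjMatrix ℝ)).IsHermitian :=
    my_isHermitian (fun p q => by
      simp only [Matrix.kroneckerMap_apply]
      rw [HmatF2_symm]
      congr 1
      simp [SimpleGraph.adjMatrix_apply, SimpleGraph.adj_comm])
  have eK : matEnergy (Matrix.kroneckerMap (· * ·) (HmatF2 (2+k)) (G.adjMatrix ℝ))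
      = ∑ i, |hK.eigenvalues i| := by rw [matEnergy, dif_pos hK]
  have eA : matEnergy (G.adjMatrix ℝ) = ∑ i, |hA.eigenvalues i| := by
    rw [matEnergy, dif_pos hA]
  have key1 : ∑ i, |hK.eigenvalues i|
      = ∑ p : Fin (2+k) × V, |hH.eigenvalues p.1 * hA.eigenvalues p.2| :=
    my_sum_abs_eig _ hK _ (my_kron_charpoly _ _ hH hA)
  have key2 : ∑ p : Fin (2+k) × V, |hH.eigenvalues p.1 * hA.eigenvalues p.2|
      = (∑ i, |hH.eigenvalues i|) * (∑ j, |hA.eigenvalues j|) := by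
    rw [Fintype.sum_prod_type]
    simp_rw [abs_mul, ← Finset.mul_sum]
    rw [← Finset.sum_mul]
  have key3 : ∑ i, |hH.eigenvalues i| = (k:ℝ) + s := by
    have h := my_sum_abs_eig _ hH (Sum.elim ![r₁, r₂] (fun _ => (-1:ℝ)))
      (my_H_charpoly k r₁ r₂ hsum hmul)
    rw [h, Fintype.sum_sum_type]
    simp only [Sum.elim_inl, Sum.elim_inr, Fin.sum_univ_two]
    simp only [Matrix.cons_val_zero, Matrix.cons_val_one, Matrix.head_cons]
    rw [habs1, habs2]
    simp only [abs_neg, abs_one, Finset.sum_const, Finset.card_univ, Fintype.card_fin,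
      nsmul_eq_mul, mul_one]
    rw [hr1def, hr2def]
    ring
  have hdisc : ((2+k:ℕ):ℝ)^2 - 2*((2+k:ℕ):ℝ) + 5 = ((k:ℝ)+1)^2 + 4 := by push_cast; ring
  rw [eK, key1, key2, key3, ← eA, hdisc]
  have : ((2+k:ℕ):ℝ) - 2 = (k:ℝ) := by push_cast; ring
  rw [this]


end
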